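/- For M ∈ AMS_{3k−1} (k ≥ 1), one has M ∪ {3k} ∉ AMS_{3k} if and only if |M| = 2k−1. -/

import Mathlib

/-! Mesas of a Stirling permutation of order `n` sit at positions in `[2, 2n - 2]`, and two mesa
positions are at least three apart, so there are at most `(2n - 4) / 3 + 1` mesas; for `n = 3k - 1`
and `n = 3k` this is `2k - 1`, so a mesa set of size `2k - 1` admits no extra mesa. If there are
fewer mesas, some gap between consecutive letters lies at distance at least two from every mesa
position, and inserting `(n + 1) (n + 1)` there keeps all old mesas and adds the mesa `n + 1`. -/

/-- `w` (read on positions `1,…,2n`) is a Stirling permutation of order `n`: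
each value `1,…,n` appears exactly twice, all letters lie in `[1,n]`, and every
value between the two copies of a value exceeds it. -/
def IsStirling (n : ℕ) (w : ℕ → ℕ) : Prop :=
  (∀ k, 1 ≤ k → k ≤ n → ((Finset.Icc 1 (2*n)).filter (fun i => w i = k)).card = 2) ∧
  (∀ i, 1 ≤ i → i ≤ 2*n → 1 ≤ w i ∧ w i ≤ n) ∧
  (∀ i j l, 1 ≤ i → i < j → j < l → l ≤ 2*n → w i = w l → w i < w j)

/-- The set of mesas of `w`: values `m` with `w(i-1) < w(i) = w(i+1) = m > w(i+2)`
for some `2 ≤ i ≤ 2n-2`. -/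
def MesaSet (n : ℕ) (w : ℕ → ℕ) : Set ℕ :=
  {m | ∃ i, 2 ≤ i ∧ i + 2 ≤ 2*n ∧ w (i-1) < w i ∧ w i = w (i+1) ∧ w (i+2) < w i ∧ w i = m}

/-- The collection of admissible mesa sets of order `n`. -/
def AMS (n : ℕ) : Set (Set ℕ) := {M | ∃ w, IsStirling n w ∧ MesaSet n w = M}

open Finset

lemma card_le_of_add_three_le {s : Finset ℕ} {a b : ℕ} (hs : s ⊆ Icc a b)
    (hsep : ∀ i ∈ s, ∀ i' ∈ s, i < i' → i + 3 ≤ i') : #s ≤ (b - a) / 3 + 1 := by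
  have hmaps : Set.MapsTo (fun i => (i - a) / 3) s (range ((b - a) / 3 + 1)) := by
    intro i hi
    have := mem_Icc.mp (hs hi)
    simp only [coe_range, Set.mem_Iio]
    omega
  have hinj : Set.InjOn (fun i => (i - a) / 3) s := by
    intro x hx y hy hxy
    have := mem_Icc.mp (hs hx)
    have := mem_Icc.mp (hs hy)
    rcases lt_trichotomy x y with h | h | h
    · have := hsep x hx y hy h; simp only at hxy; omega
    · exact h
    · have := hsep y hy x hx h; simp only at hxy; omega
  simpa using card_le_card_of_injOn _ hmaps hinj

lemma exists_mem_Icc_forall_far (s : Finset ℕ) {a b : ℕ} (h : 3 * #s < b + 1 - a) :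
    ∃ j ∈ Icc a b, ∀ i ∈ s, i + 2 ≤ j ∨ j + 2 ≤ i := by
  by_contra! hnear
  have hsub : Icc a b ⊆ s.biUnion fun i => Icc (i - 1) (i + 1) := by
    intro j hj
    obtain ⟨i, hi, hji⟩ := hnear j hj
    exact mem_biUnion.mpr ⟨i, hi, mem_Icc.mpr (by omega)⟩
  have := (card_le_card hsub).trans
    (card_biUnion_le_card_mul s _ 3 fun i _ => by simp only [Nat.card_Icc]; omega)
  simp only [Nat.card_Icc] at this
  omega

def IsMesaAt (w : ℕ → ℕ) (i : ℕ) : Prop :=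
  w (i - 1) < w i ∧ w i = w (i + 1) ∧ w (i + 2) < w i

instance (w : ℕ → ℕ) : DecidablePred (IsMesaAt w) :=
  fun _ => inferInstanceAs (Decidable (_ ∧ _ ∧ _))

def mesaPositions (n : ℕ) (w : ℕ → ℕ) : Finset ℕ :=
  (Icc 2 (2 * n - 2)).filter (IsMesaAt w)

lemma mem_mesaPositions {n : ℕ} {w : ℕ → ℕ} {i : ℕ} :
    i ∈ mesaPositions n w ↔ 2 ≤ i ∧ i + 2 ≤ 2 * n ∧ IsMesaAt w i := by
  rw [mesaPositions, mem_filter, mem_Icc, and_assoc]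
  exact and_congr_right fun h2 => and_congr_left' (by omega)

lemma mesaSet_eq_image (n : ℕ) (w : ℕ → ℕ) : MesaSet n w = (mesaPositions n w).image w := by
  ext m
  simp only [MesaSet, IsMesaAt, coe_image, Set.mem_image, mem_coe, mem_mesaPositions]
  constructor
  · rintro ⟨i, h2, hn, hl, he, hr, rfl⟩; exact ⟨i, ⟨h2, hn, hl, he, hr⟩, rfl⟩
  · rintro ⟨i, ⟨h2, hn, hl, he, hr⟩, rfl⟩; exact ⟨i, h2, hn, hl, he, hr, rfl⟩

lemma IsMesaAt.add_three_le {w : ℕ → ℕ} {i i' : ℕ} (h : IsMesaAt w i) (h' : IsMesaAt w i')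
    (hlt : i < i') : i + 3 ≤ i' := by
  obtain ⟨-, he, hr⟩ := h
  obtain ⟨hl', -, -⟩ := h'
  by_contra!
  obtain rfl | rfl : i' = i + 1 ∨ i' = i + 2 := by omega
  · rw [Nat.add_sub_cancel] at hl'; omega
  · rw [show i + 2 - 1 = i + 1 by omega] at hl'; omega

lemma ncard_mesaSet_le (n : ℕ) (w : ℕ → ℕ) : (MesaSet n w).ncard ≤ (2 * n - 4) / 3 + 1 := by
  rw [mesaSet_eq_image, Set.ncard_coe_finset]
  refine card_image_le.trans ((card_le_of_add_three_le (filter_subset _ _)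
    fun i hi i' hi' hlt => ?_).trans (by omega))
  exact (mem_filter.mp hi).2.add_three_le (mem_filter.mp hi').2 hlt

lemma IsStirling.le_of_mem_mesaSet {n : ℕ} {w : ℕ → ℕ} (hw : IsStirling n w) {m : ℕ}
    (hm : m ∈ MesaSet n w) : m ≤ n := by
  obtain ⟨i, h2, hn, -, -, -, rfl⟩ := hm
  exact (hw.2.1 i (by omega) (by omega)).2

/-- Two mesas `i < i'` of equal height would put `w (i + 1) = w i` strictly between them. -/
lemma IsStirling.injOn_mesaPositions {n : ℕ} {w : ℕ → ℕ} (hw : IsStirling n w) :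
    Set.InjOn w (mesaPositions n w) := by
  have key : ∀ i ∈ mesaPositions n w, ∀ i' ∈ mesaPositions n w, i < i' → w i ≠ w i' := by
    intro i hi i' hi' hlt heq
    have hsep := (mem_mesaPositions.mp hi).2.2.add_three_le (mem_mesaPositions.mp hi').2.2 hlt
    obtain ⟨h2, -, -, he, -⟩ := mem_mesaPositions.mp hi
    obtain ⟨-, hn', -⟩ := mem_mesaPositions.mp hi'
    have := hw.2.2 i (i + 1) i' (by omega) (by omega) (by omega) (by omega) heq
    omega
  intro i hi i' hi' heq
  rcases lt_trichotomy i i' with h | h | h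
  · exact absurd heq (key i hi i' hi' h)
  · exact h
  · exact absurd heq.symm (key i' hi' i hi h)

lemma IsStirling.card_mesaPositions {n : ℕ} {w : ℕ → ℕ} (hw : IsStirling n w) :
    #(mesaPositions n w) = (MesaSet n w).ncard := by
  rw [mesaSet_eq_image, Set.ncard_coe_finset, card_image_of_injOn hw.injOn_mesaPositions]

/-- Where the letter at position `i` moves when two letters are inserted after position `j`. -/
def pairSuccAbove (j i : ℕ) : ℕ := if i ≤ j then i else i + 2

def insertPair (w : ℕ → ℕ) (j v : ℕ) : ℕ → ℕ :=
  fun p => if p ≤ j then w p else if p ≤ j + 2 then v else w (p - 2)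

lemma pairSuccAbove_strictMono (j : ℕ) : StrictMono (pairSuccAbove j) := by
  intro a b h
  simp only [pairSuccAbove]
  split_ifs <;> omega

lemma pairSuccAbove_mem_Icc_iff {n j i : ℕ} (hj : j ≤ 2 * n) :
    pairSuccAbove j i ∈ Icc 1 (2 * (n + 1)) ↔ i ∈ Icc 1 (2 * n) := by
  simp only [pairSuccAbove, mem_Icc]
  split_ifs <;> omega

lemma insertPair_of_le (w : ℕ → ℕ) {j v p : ℕ} (h : p ≤ j) : insertPair w j v p = w p :=
  if_pos h

lemma insertPair_add_two_of_lt (w : ℕ → ℕ) {j v i : ℕ} (h : j < i) :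
    insertPair w j v (i + 2) = w i := by
  rw [insertPair, if_neg (by omega), if_neg (by omega), Nat.add_sub_cancel]

lemma insertPair_pairSuccAbove (w : ℕ → ℕ) (j v i : ℕ) :
    insertPair w j v (pairSuccAbove j i) = w i := by
  unfold pairSuccAbove
  split_ifs with h
  exacts [insertPair_of_le w h, insertPair_add_two_of_lt w (not_le.mp h)]

lemma insertPair_of_eq (w : ℕ → ℕ) {j v p : ℕ} (hp : p = j + 1 ∨ p = j + 2) :
    insertPair w j v p = v := by
  rw [insertPair, if_neg (by omega), if_pos (by omega)]

lemma eq_or_exists_pairSuccAbove_eq {n j p : ℕ} (hj : j ≤ 2 * n) (hp : p ∈ Icc 1 (2 * (n + 1))) :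
    (p = j + 1 ∨ p = j + 2) ∨ ∃ i ∈ Icc 1 (2 * n), pairSuccAbove j i = p := by
  by_cases hnew : p = j + 1 ∨ p = j + 2
  · exact Or.inl hnew
  obtain ⟨i, rfl⟩ : ∃ i, pairSuccAbove j i = p := by
    rcases le_or_gt p j with h | h
    · exact ⟨p, if_pos h⟩
    · exact ⟨p - 2, by rw [pairSuccAbove, if_neg (by omega)]; omega⟩
  exact Or.inr ⟨i, (pairSuccAbove_mem_Icc_iff hj).mp hp, rfl⟩

lemma IsStirling.card_filter_insertPair {n : ℕ} {w : ℕ → ℕ} (hw : IsStirling n w) {j v : ℕ}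
    (hj : j ≤ 2 * n) (hv1 : 1 ≤ v) (hv2 : v ≤ n + 1) :
    #((Icc 1 (2 * (n + 1))).filter fun p => insertPair w j (n + 1) p = v) = 2 := by
  rcases Nat.lt_or_ge v (n + 1) with hv | hv
  · have hfilter : (Icc 1 (2 * (n + 1))).filter (fun p => insertPair w j (n + 1) p = v) =
        ((Icc 1 (2 * n)).filter (fun i => w i = v)).image (pairSuccAbove j) := by
      ext p
      simp only [mem_filter, mem_image]
      constructor
      · rintro ⟨hp, rfl⟩
        rcases eq_or_exists_pairSuccAbove_eq hj hp with hnew | ⟨i, hi, rfl⟩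
        · simp [insertPair_of_eq w hnew] at hv
        · exact ⟨i, ⟨hi, (insertPair_pairSuccAbove w j _ i).symm⟩, rfl⟩
      · rintro ⟨i, ⟨hi, rfl⟩, rfl⟩
        exact ⟨(pairSuccAbove_mem_Icc_iff hj).mpr hi, insertPair_pairSuccAbove w j _ i⟩
    rw [hfilter, card_image_of_injective _ (pairSuccAbove_strictMono j).injective,
      hw.1 v hv1 (by omega)]
  · have hfilter : (Icc 1 (2 * (n + 1))).filter (fun p => insertPair w j (n + 1) p = v) =
        {j + 1, j + 2} := by
      ext p
      simp only [mem_filter, mem_insert, mem_singleton]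
      constructor
      · rintro ⟨hp, rfl⟩
        rcases eq_or_exists_pairSuccAbove_eq hj hp with hnew | ⟨i, hi, rfl⟩
        · exact hnew
        · have := hw.2.1 i (mem_Icc.mp hi).1 (mem_Icc.mp hi).2
          rw [insertPair_pairSuccAbove] at hv
          omega
      · intro hnew
        exact ⟨mem_Icc.mpr (by omega), by rw [insertPair_of_eq w hnew]; omega⟩
    rw [hfilter, card_pair (by omega)]

lemma isStirling_insertPair {n : ℕ} {w : ℕ → ℕ} (hw : IsStirling n w) {j : ℕ} (hj : j ≤ 2 * n) :
    IsStirling (n + 1) (insertPair w j (n + 1)) := by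
  have hcases := fun p hp => eq_or_exists_pairSuccAbove_eq (p := p) hj hp
  have hrange : ∀ i ∈ Icc 1 (2 * n), 1 ≤ w i ∧ w i ≤ n := fun i hi =>
    hw.2.1 i (mem_Icc.mp hi).1 (mem_Icc.mp hi).2
  refine ⟨fun v hv1 hv2 => hw.card_filter_insertPair hj hv1 hv2, fun p hp1 hp2 => ?_,
    fun a b c ha hab hbc hc heq => ?_⟩
  · rcases hcases p (mem_Icc.mpr ⟨hp1, hp2⟩) with hnew | ⟨i, hi, rfl⟩
    · rw [insertPair_of_eq w hnew]; omega
    · rw [insertPair_pairSuccAbove]; have := hrange i hi; omega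
  rcases hcases a (mem_Icc.mpr ⟨ha, by omega⟩) with hanew | ⟨i, hi, rfl⟩
  · rcases hcases c (mem_Icc.mpr ⟨by omega, hc⟩) with hcnew | ⟨k, hk, rfl⟩
    · omega
    · rw [insertPair_of_eq w hanew, insertPair_pairSuccAbove] at heq
      have := hrange k hk; omega
  rcases hcases c (mem_Icc.mpr ⟨by omega, hc⟩) with hcnew | ⟨k, hk, rfl⟩
  · rw [insertPair_of_eq w hcnew, insertPair_pairSuccAbove] at heq
    have := hrange i hi; omega
  rw [insertPair_pairSuccAbove, insertPair_pairSuccAbove] at heq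
  rw [insertPair_pairSuccAbove]
  rcases hcases b (mem_Icc.mpr ⟨by omega, by omega⟩) with hbnew | ⟨l, hl, rfl⟩
  · rw [insertPair_of_eq w hbnew]; have := hrange i hi; omega
  rw [insertPair_pairSuccAbove]
  exact hw.2.2 i l k (mem_Icc.mp hi).1 ((pairSuccAbove_strictMono j).lt_iff_lt.mp hab)
    ((pairSuccAbove_strictMono j).lt_iff_lt.mp hbc) (mem_Icc.mp hk).2 heq

lemma isMesaAt_iff_of_window {w w' : ℕ → ℕ} {a d : ℕ} (h : ∀ t ≤ 3, w' (a + d + t) = w (a + t)) :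
    IsMesaAt w' (a + d + 1) ↔ IsMesaAt w (a + 1) := by
  have h0 : w' (a + d) = w a := h 0 (by norm_num)
  have h1 : w' (a + d + 1) = w (a + 1) := h 1 (by norm_num)
  have h2 : w' (a + d + 2) = w (a + 2) := h 2 (by norm_num)
  have h3 : w' (a + d + 3) = w (a + 3) := h 3 (by norm_num)
  show w' (a + d + 1 - 1) < _ ∧ _ = w' (a + d + 2) ∧ w' (a + d + 3) < _ ↔
    w (a + 1 - 1) < _ ∧ _ = w (a + 2) ∧ w (a + 3) < _
  rw [Nat.add_sub_cancel, Nat.add_sub_cancel, h0, h1, h2, h3]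

lemma isMesaAt_insertPair_pairSuccAbove {w : ℕ → ℕ} {j v i : ℕ} (hi : 1 ≤ i)
    (hij : i + 2 ≤ j ∨ j + 2 ≤ i) :
    IsMesaAt (insertPair w j v) (pairSuccAbove j i) ↔ IsMesaAt w i := by
  obtain ⟨a, rfl⟩ : ∃ a, i = a + 1 := ⟨i - 1, by omega⟩
  rcases hij with hij | hij
  · rw [pairSuccAbove, if_pos (by omega)]
    simpa using isMesaAt_iff_of_window (d := 0) fun t ht =>
      insertPair_of_le (v := v) w (show a + 0 + t ≤ j by omega)
  · rw [pairSuccAbove, if_neg (by omega), add_right_comm]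
    exact isMesaAt_iff_of_window fun t ht => by
      rw [add_right_comm]; exact insertPair_add_two_of_lt w (by omega)

lemma IsStirling.isMesaAt_insertPair {n : ℕ} {w : ℕ → ℕ} (hw : IsStirling n w) {j : ℕ}
    (hj1 : 1 ≤ j) (hj : j + 1 ≤ 2 * n) : IsMesaAt (insertPair w j (n + 1)) (j + 1) := by
  have hv1 : insertPair w j (n + 1) (j + 1) = n + 1 := insertPair_of_eq w (Or.inl rfl)
  have hwj := (hw.2.1 j hj1 (by omega)).2
  have hwj' := (hw.2.1 (j + 1) (by omega) hj).2
  refine ⟨?_, hv1.trans (insertPair_of_eq w (Or.inr rfl)).symm, ?_⟩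
  · rw [Nat.add_sub_cancel, insertPair_of_le w le_rfl, hv1]; omega
  · rw [hv1, insertPair_add_two_of_lt w (show j < j + 1 by omega)]; omega

lemma mesaPositions_insertPair {n : ℕ} {w : ℕ → ℕ} (hw : IsStirling n w) {j : ℕ} (hj1 : 1 ≤ j)
    (hj : j + 1 ≤ 2 * n) (hfar : ∀ i ∈ mesaPositions n w, i + 2 ≤ j ∨ j + 2 ≤ i) :
    mesaPositions (n + 1) (insertPair w j (n + 1)) =
      insert (j + 1) ((mesaPositions n w).image (pairSuccAbove j)) := by
  have hv1 : insertPair w j (n + 1) (j + 1) = n + 1 := insertPair_of_eq w (Or.inl rfl)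
  have hv2 : insertPair w j (n + 1) (j + 2) = n + 1 := insertPair_of_eq w (Or.inr rfl)
  ext p
  simp only [mem_insert, mem_image]
  constructor
  · intro hp
    obtain ⟨h2, hn, hmesa⟩ := mem_mesaPositions.mp hp
    by_cases htop : p = j + 1
    · exact Or.inl htop
    have hle := ((isStirling_insertPair hw (j := j) (by omega)).2.1 p (by omega) (by omega)).2
    have hl := hmesa.1
    have hr := hmesa.2.2
    -- a letter `n + 1` next to the mesa would be higher than it
    have hsep : p + 2 ≤ j ∨ j + 4 ≤ p := by
      by_contra! hnear
      obtain h | h | h | h : p - 1 = j + 1 ∨ p - 1 = j + 2 ∨ p + 2 = j + 1 ∨ p + 2 = j + 2 := by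
        omega
      · rw [h, hv1] at hl; omega
      · rw [h, hv2] at hl; omega
      · rw [h, hv1] at hr; omega
      · rw [h, hv2] at hr; omega
    obtain ⟨i, hi, hij, rfl⟩ : ∃ i, 2 ≤ i ∧ (i + 2 ≤ j ∨ j + 2 ≤ i) ∧ pairSuccAbove j i = p := by
      rcases hsep with h | h
      · exact ⟨p, h2, Or.inl h, if_pos (by omega)⟩
      · exact ⟨p - 2, by omega, Or.inr (by omega), by rw [pairSuccAbove, if_neg (by omega)]; omega⟩
    refine Or.inr ⟨i, mem_mesaPositions.mpr ⟨hi, ?_, ?_⟩, rfl⟩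
    · unfold pairSuccAbove at hn; split_ifs at hn <;> omega
    · exact (isMesaAt_insertPair_pairSuccAbove (by omega) hij).mp hmesa
  · rintro (rfl | ⟨i, hi, rfl⟩)
    · exact mem_mesaPositions.mpr ⟨by omega, by omega, hw.isMesaAt_insertPair hj1 hj⟩
    · obtain ⟨h2, hn, hmesa⟩ := mem_mesaPositions.mp hi
      refine mem_mesaPositions.mpr ⟨?_, ?_,
        (isMesaAt_insertPair_pairSuccAbove (by omega) (hfar i hi)).mpr hmesa⟩
      all_goals unfold pairSuccAbove; split_ifs <;> omega

lemma mesaSet_insertPair {n : ℕ} {w : ℕ → ℕ} (hw : IsStirling n w) {j : ℕ} (hj1 : 1 ≤ j)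
    (hj : j + 1 ≤ 2 * n) (hfar : ∀ i ∈ mesaPositions n w, i + 2 ≤ j ∨ j + 2 ≤ i) :
    MesaSet (n + 1) (insertPair w j (n + 1)) = insert (n + 1) (MesaSet n w) := by
  rw [mesaSet_eq_image, mesaSet_eq_image, mesaPositions_insertPair hw hj1 hj hfar, image_insert,
    image_image, insertPair_of_eq w (Or.inl rfl), coe_insert]
  congr 3
  exact funext (insertPair_pairSuccAbove w j _)

lemma IsStirling.insert_mesaSet_mem_AMS {n : ℕ} {w : ℕ → ℕ} (hw : IsStirling n w)
    (h : 3 * (MesaSet n w).ncard < 2 * n - 1) : insert (n + 1) (MesaSet n w) ∈ AMS (n + 1) := by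
  obtain ⟨j, hj, hfar⟩ := exists_mem_Icc_forall_far (mesaPositions n w) (a := 1) (b := 2 * n - 1)
    (by rw [hw.card_mesaPositions]; omega)
  obtain ⟨hj1, hj⟩ := mem_Icc.mp hj
  exact ⟨_, isStirling_insertPair hw (by omega), mesaSet_insertPair hw hj1 (by omega) hfar⟩

lemma IsStirling.ncard_insert_mesaSet {n : ℕ} {w : ℕ → ℕ} (hw : IsStirling n w) :
    (insert (n + 1) (MesaSet n w)).ncard = (MesaSet n w).ncard + 1 := by
  refine Set.ncard_insert_of_notMem (fun h => ?_) ?_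
  · have := hw.le_of_mem_mesaSet h; omega
  · rw [mesaSet_eq_image]; exact finite_toSet _

theorem cant_add_to_full_set (k : ℕ) (hk : 1 ≤ k) (M : Set ℕ) (hM : M ∈ AMS (3*k-1)) :
    M ∪ {(3*k : ℕ)} ∉ AMS (3*k) ↔ M.ncard = 2*k - 1 := by
  obtain ⟨w, hw, rfl⟩ := hM
  generalize hn : 3 * k - 1 = n at hw
  rw [Set.union_singleton, show 3 * k = n + 1 by omega]
  have hle := ncard_mesaSet_le n w
  constructor
  · intro hnot
    by_contra hne
    exact hnot (hw.insert_mesaSet_mem_AMS (by omega))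
  · rintro hcard ⟨w', -, hw'⟩
    have hle' := ncard_mesaSet_le (n + 1) w'
    rw [hw', hw.ncard_insert_mesaSet] at hle'
    omega
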